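/- Under the hypotheses of the previous statement (0 < ε ≤ ∫_α^1 B_φ(M, F₀⁻¹(t)) dt), the supremum sup_{F ∈ 𝓑(F₀,ε)} F⁻¹(α) = V̄_α is not attained: there exists no F* ∈ 𝓑(F₀,ε) with F*⁻¹(α) = V̄_α. -/

import Mathlib

/-- `F` is a CDF with support contained in `[0,M]`. -/
def IsCDFOn (F : ℝ → ℝ) (M : ℝ) : Prop :=
  Monotone F ∧ (∀ x < (0:ℝ), F x = 0) ∧ (∀ x, M ≤ x → F x = 1) ∧
    ∀ x, ContinuousWithinAt F (Set.Ici x) x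

/-- Left-continuous quantile function (`VaR` at level `t`). -/
noncomputable def quantile (F : ℝ → ℝ) (t : ℝ) : ℝ :=
  sInf {z | t ≤ F z}

/-- Bregman divergence with generator `φ`. -/
noncomputable def Bdiv (φ : ℝ → ℝ) (x y : ℝ) : ℝ :=
  φ x - φ y - deriv φ y * (x - y)

/-- `F` belongs to the Bregman–Wasserstein ball of radius `ε` around `F₀`. -/
noncomputable def InBWBall (φ F₀ F : ℝ → ℝ) (M ε : ℝ) : Prop :=
  IsCDFOn F M ∧
    (∫ t in Set.Ioo (0:ℝ) 1, Bdiv φ (quantile F t) (quantile F₀ t)) ≤ ε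

/-- The worst-case VaR threshold `V̄_α`. -/
noncomputable def Vbar (φ F₀ : ℝ → ℝ) (M ε α : ℝ) : ℝ :=
  sInf {D : ℝ | D ∈ Set.Ioc (quantile F₀ α) M ∧
    ε ≤ ∫ t in Set.Ioc α (F₀ D), Bdiv φ D (quantile F₀ t)}

open Set MeasureTheory Filter

section Bdiv
variable {φ : ℝ → ℝ} (hφ : StrictConvexOn ℝ Set.univ φ) (hφd : ContDiff ℝ 1 φ)

theorem bdiv_self (x : ℝ) : Bdiv φ x x = 0 := by simp [Bdiv]

include hφ hφd in
theorem bdiv_pos {x y : ℝ} (hxy : x ≠ y) : 0 < Bdiv φ x y := by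
  have hd : ∀ z : ℝ, DifferentiableAt ℝ φ z := fun z =>
    (hφd.differentiable one_ne_zero) z
  rcases lt_or_gt_of_ne hxy with h | h
  · have := hφ.slope_lt_deriv (mem_univ x) (mem_univ y) h (hd y)
    rw [slope_def_field] at this
    have hxy' : 0 < y - x := by linarith
    rw [div_lt_iff₀ hxy'] at this
    unfold Bdiv; nlinarith
  · have := hφ.deriv_lt_slope (mem_univ y) (mem_univ x) h (hd y)
    rw [slope_def_field] at this
    have hxy' : 0 < x - y := by linarith
    rw [lt_div_iff₀ hxy'] at this
    unfold Bdiv; nlinarith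

include hφ hφd in
theorem bdiv_nonneg (x y : ℝ) : 0 ≤ Bdiv φ x y := by
  rcases eq_or_ne x y with rfl | h
  · simp [bdiv_self]
  · exact (bdiv_pos hφ hφd h).le

include hφ hφd in
theorem bdiv_mono {x y a : ℝ} (hya : y ≤ a) (hax : a ≤ x) :
    Bdiv φ a y ≤ Bdiv φ x y := by
  have hd : ∀ z : ℝ, DifferentiableAt ℝ φ z := fun z =>
    (hφd.differentiable one_ne_zero) z
  rcases eq_or_lt_of_le hax with rfl | hax
  · exact le_rfl
  · have h1 := hφ.deriv_lt_slope (mem_univ a) (mem_univ x) hax (hd a)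
    rw [slope_def_field, lt_div_iff₀ (by linarith : (0:ℝ) < x - a)] at h1
    have h2 : deriv φ y ≤ deriv φ a := by
      rcases eq_or_lt_of_le hya with rfl | hya
      · exact le_rfl
      · exact (hφ.strictMonoOn_deriv (fun z _ => hd z) (mem_univ y) (mem_univ a) hya).le
    unfold Bdiv
    nlinarith [mul_le_mul_of_nonneg_right h2 (by linarith : (0:ℝ) ≤ x - a)]

include hφd in
theorem bdiv_lip {M K x y a : ℝ} (hK : ∀ z ∈ Icc (0:ℝ) M, |deriv φ z| ≤ K)
    (hy : y ∈ Icc (0:ℝ) M) (ha : a ∈ Icc (0:ℝ) M) (hx : x ∈ Icc (0:ℝ) M)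
    (hax : a ≤ x) : Bdiv φ x y - Bdiv φ a y ≤ 2 * K * (x - a) := by
  have hKy := hK y hy
  have hφax : φ x - φ a ≤ K * (x - a) := by
    rcases eq_or_lt_of_le hax with rfl | hax
    · norm_num
    · obtain ⟨c, hc, hc'⟩ := exists_deriv_eq_slope φ hax
        (hφd.continuous.continuousOn) ((hφd.differentiable one_ne_zero).differentiableOn)
      have hcM : c ∈ Icc (0:ℝ) M := ⟨le_trans ha.1 hc.1.le, le_trans hc.2.le hx.2⟩
      have := hK c hcM
      have h2 : φ x - φ a = deriv φ c * (x - a) := by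
        rw [hc', div_mul_cancel₀ _ (sub_ne_zero.mpr hax.ne')]
      rw [h2]
      have := abs_le.mp (hK c hcM)
      nlinarith
  have := abs_le.mp hKy
  unfold Bdiv
  nlinarith
end Bdiv

section Quantile
variable {F : ℝ → ℝ} {M : ℝ} (hF : IsCDFOn F M)

include hF in
theorem cdf_nonneg (z : ℝ) : 0 ≤ F z := by
  have h1 : F (min z (-1)) = 0 := hF.2.1 _ (lt_of_le_of_lt (min_le_right _ _) (by norm_num))
  have := hF.1 (min_le_left z (-1))
  linarith

include hF in
theorem cdf_le_one (z : ℝ) : F z ≤ 1 := by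
  have h1 : F (max z M) = 1 := hF.2.2.1 _ (le_max_right _ _)
  have := hF.1 (le_max_left z M)
  linarith

include hF in
theorem quantile_bddBelow {t : ℝ} (ht : 0 < t) : BddBelow {z | t ≤ F z} := by
  refine ⟨0, fun z hz => ?_⟩
  by_contra h
  push_neg at h
  have := hF.2.1 z h
  simp only [mem_setOf_eq] at hz
  linarith

include hF in
theorem quantile_nonempty {t : ℝ} (ht : t ≤ 1) : {z | t ≤ F z}.Nonempty :=
  ⟨M, by simpa [hF.2.2.1 M le_rfl] using ht⟩

include hF in
theorem quantile_le {t z : ℝ} (ht : 0 < t) (hz : t ≤ F z) : quantile F t ≤ z :=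
  csInf_le (quantile_bddBelow hF ht) hz

include hF in
theorem le_quantile {t x : ℝ} (ht : t ≤ 1) (h : ∀ z, t ≤ F z → x ≤ z) :
    x ≤ quantile F t :=
  le_csInf (quantile_nonempty hF ht) h

include hF in
theorem quantile_nonneg {t : ℝ} (ht : 0 < t) (ht1 : t ≤ 1) : 0 ≤ quantile F t :=
  le_quantile hF ht1 fun z hz => by
    by_contra h; push_neg at h
    have := hF.2.1 z h; linarith

include hF in
theorem quantile_le_M {t : ℝ} (ht : 0 < t) (ht1 : t ≤ 1) : quantile F t ≤ M :=
  quantile_le hF ht (by simpa [hF.2.2.1 M le_rfl] using ht1)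

include hF in
theorem quantile_mono {s t : ℝ} (hs : 0 < s) (hst : s ≤ t) (ht : t ≤ 1) :
    quantile F s ≤ quantile F t :=
  csInf_le_csInf (quantile_bddBelow hF hs) (quantile_nonempty hF ht)
    (fun z hz => le_trans hst hz)

include hF in
theorem le_cdf_quantile {t : ℝ} (ht : 0 < t) (ht1 : t ≤ 1) :
    t ≤ F (quantile F t) := by
  set q := quantile F t with hq
  have hmem : ∀ z, q < z → t ≤ F z := by
    intro z hz
    obtain ⟨w, hw, hwz⟩ := exists_lt_of_csInf_lt (quantile_nonempty hF ht1) hz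
    exact le_trans hw (hF.1 hwz.le)
  have hc : ContinuousWithinAt F (Ioi q) q :=
    (hF.2.2.2 q).mono Ioi_subset_Ici_self
  exact ge_of_tendsto hc (eventually_nhdsWithin_of_forall fun z hz => hmem z hz)

include hF in
theorem measurable_quantile : Measurable (quantile F) := by
  have key : ∀ t, quantile F t = if t ≤ 1 then quantile F (min t 1) else 0 := by
    intro t
    split_ifs with h
    · rw [min_eq_left h]
    · push_neg at h
      have : {z | t ≤ F z} = ∅ := by
        ext z; simp only [mem_setOf_eq, mem_empty_iff_false, iff_false, not_le]
        exact lt_of_le_of_lt (cdf_le_one hF z) h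
      rw [quantile, this, Real.sInf_empty]
  have hmono : Monotone fun t => quantile F (min t 1) := by
    intro s t hst
    show quantile F (min s 1) ≤ quantile F (min t 1)
    rcases le_or_gt (min s 1) 0 with h | h
    · have hs0 : quantile F (min s 1) = 0 := by
        have : {z | min s 1 ≤ F z} = univ :=
          eq_univ_of_forall fun z => le_trans h (cdf_nonneg hF z)
        rw [quantile, this, Real.sInf_of_not_bddBelow]
        exact fun hb => not_bddBelow_univ hb
      rcases le_or_gt (min t 1) 0 with h2 | h2
      · have : {z | min t 1 ≤ F z} = univ :=
          eq_univ_of_forall fun z => le_trans h2 (cdf_nonneg hF z)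
        rw [hs0, quantile, this, Real.sInf_of_not_bddBelow]
        exact fun hb => not_bddBelow_univ hb
      · rw [hs0]
        exact quantile_nonneg hF h2 (min_le_right _ _)
    · exact quantile_mono hF h (min_le_min hst le_rfl) (min_le_right _ _)
  have : quantile F = fun t => if t ≤ 1 then quantile F (min t 1) else 0 :=
    funext key
  rw [this]
  exact Measurable.ite measurableSet_Iic hmono.measurable measurable_const
end Quantile

theorem continuous_bdiv {φ : ℝ → ℝ} (hφd : ContDiff ℝ 1 φ) :
    Continuous fun p : ℝ × ℝ => Bdiv φ p.1 p.2 := by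
  have h1 : Continuous φ := hφd.continuous
  have h2 : Continuous (deriv φ) := hφd.continuous_deriv le_rfl
  unfold Bdiv
  exact ((h1.comp continuous_fst).sub (h1.comp continuous_snd)).sub
    ((h2.comp continuous_snd).mul (continuous_fst.sub continuous_snd))

theorem integrableOn_of_bdd {f : ℝ → ℝ} {u : Set ℝ} {C : ℝ}
    (hu : MeasurableSet u) (hfin : MeasureTheory.volume u ≠ ⊤) (hf : Measurable f)
    (hb : ∀ t ∈ u, ‖f t‖ ≤ C) : IntegrableOn f u :=
  MeasureTheory.Measure.integrableOn_of_bounded hfin hf.aestronglyMeasurable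
    ((ae_restrict_iff' hu).mpr (Filter.Eventually.of_forall hb))

theorem aux_div {c x : ℝ} (hc : 0 ≤ c) (hx : 0 < x) :
    c * (x / (2 * (c + 1))) ≤ x / 2 := by
  rw [mul_div_assoc', div_le_div_iff₀ (by positivity) (by norm_num)]
  nlinarith

set_option maxHeartbeats 1000000 in
/-- the supremum `V̄_α` of the `α`-quantile over the BW ball
is never attained. -/
theorem sup_var_not_attained (M ε α : ℝ) (hM : 0 < M) (hε : 0 < ε)
    (hα : α ∈ Set.Ioo (0:ℝ) 1) (φ F₀ : ℝ → ℝ)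
    (hφ : StrictConvexOn ℝ Set.univ φ) (hφd : ContDiff ℝ 1 φ)
    (hF₀ : IsCDFOn F₀ M)
    (hsmall : ε ≤ ∫ t in Set.Ioc α 1, Bdiv φ M (quantile F₀ t)) :
    ¬ ∃ F : ℝ → ℝ, InBWBall φ F₀ F M ε ∧ quantile F α = Vbar φ F₀ M ε α := by
  obtain ⟨hα0, hα1⟩ := hα
  rintro ⟨F, ⟨hFcdf, hcost⟩, hqF⟩
  have hF₀m := hF₀.1
  set q₀ : ℝ → ℝ := quantile F₀ with hq₀def
  set q : ℝ → ℝ := quantile F with hqdef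
  have hq0α0 : 0 ≤ q₀ α := quantile_nonneg hF₀ hα0 hα1.le
  have hq0αM : q₀ α ≤ M := quantile_le_M hF₀ hα0 hα1.le
  -- the case `q₀ α = M` contradicts `hsmall`
  have hq0M : q₀ α < M := by
    rcases lt_or_eq_of_le hq0αM with h | h
    · exact h
    · exfalso
      have hz : EqOn (fun t => Bdiv φ M (q₀ t)) (fun _ => (0:ℝ)) (Ioc α 1) := by
        intro t ht
        have h1 : q₀ t ≤ M := quantile_le_M hF₀ (lt_trans hα0 ht.1) ht.2
        have h2 : M ≤ q₀ t := h ▸ quantile_mono hF₀ hα0 ht.1.le ht.2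
        simp only
        rw [le_antisymm h1 h2, bdiv_self]
      have : (∫ t in Ioc α 1, Bdiv φ M (q₀ t)) = 0 := by
        rw [setIntegral_congr_fun measurableSet_Ioc hz]; simp
      rw [this] at hsmall
      linarith
  -- the defining set of `Vbar`
  set S := {D : ℝ | D ∈ Set.Ioc (q₀ α) M ∧
      ε ≤ ∫ t in Set.Ioc α (F₀ D), Bdiv φ D (q₀ t)} with hSdef
  have hMS : M ∈ S := ⟨⟨hq0M, le_rfl⟩, by rw [hF₀.2.2.1 M le_rfl]; exact hsmall⟩
  have hSne : S.Nonempty := ⟨M, hMS⟩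
  have hbdd : BddBelow S := ⟨q₀ α, fun D hD => hD.1.1.le⟩
  set V := Vbar φ F₀ M ε α with hVdef
  have hVeq : V = sInf S := rfl
  have hVleM : V ≤ M := hVeq ▸ csInf_le hbdd hMS
  have hVge : q₀ α ≤ V := hVeq ▸ le_csInf hSne fun D hD => hD.1.1.le
  have hV0 : 0 ≤ V := le_trans hq0α0 hVge
  have hVIcc : V ∈ Icc (0:ℝ) M := ⟨hV0, hVleM⟩
  -- bounds for `Bdiv` and `deriv φ` on `[0,M]`
  have hcont : Continuous fun p : ℝ × ℝ => Bdiv φ p.1 p.2 := continuous_bdiv hφd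
  obtain ⟨C, hC⟩ := (isCompact_Icc.prod isCompact_Icc :
      IsCompact (Icc (0:ℝ) M ×ˢ Icc (0:ℝ) M)).exists_bound_of_continuousOn
      hcont.continuousOn
  have h00 : ((0:ℝ), (0:ℝ)) ∈ Icc (0:ℝ) M ×ˢ Icc (0:ℝ) M :=
    ⟨⟨le_rfl, hM.le⟩, ⟨le_rfl, hM.le⟩⟩
  have hC0 : 0 ≤ C := le_trans (norm_nonneg _) (hC _ h00)
  obtain ⟨K, hK⟩ := (isCompact_Icc : IsCompact (Icc (0:ℝ) M)).exists_bound_of_continuousOn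
      (hφd.continuous_deriv le_rfl).continuousOn
  have hK0 : 0 ≤ K := le_trans (norm_nonneg _) (hK 0 ⟨le_rfl, hM.le⟩)
  have hKabs : ∀ z ∈ Icc (0:ℝ) M, |deriv φ z| ≤ K := fun z hz => by
    rw [← Real.norm_eq_abs]; exact hK z hz
  -- measurability and integrability
  have hq₀meas : Measurable q₀ := measurable_quantile hF₀
  have hqmeas : Measurable q := measurable_quantile hFcdf
  have hf1meas : Measurable fun t => Bdiv φ (q t) (q₀ t) :=
    hcont.measurable.comp (hqmeas.prodMk hq₀meas)
  have hq₀mem : ∀ t ∈ Ioc (0:ℝ) 1, q₀ t ∈ Icc (0:ℝ) M := fun t ht =>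
    ⟨quantile_nonneg hF₀ ht.1 ht.2, quantile_le_M hF₀ ht.1 ht.2⟩
  have hqmem : ∀ t ∈ Ioc (0:ℝ) 1, q t ∈ Icc (0:ℝ) M := fun t ht =>
    ⟨quantile_nonneg hFcdf ht.1 ht.2, quantile_le_M hFcdf ht.1 ht.2⟩
  have hint1 : ∀ u : Set ℝ, MeasurableSet u → u ⊆ Ioc 0 1 →
      IntegrableOn (fun t => Bdiv φ (q t) (q₀ t)) u := by
    intro u hu hsub
    refine integrableOn_of_bdd (C := C) hu (lt_of_le_of_lt (measure_mono hsub) measure_Ioc_lt_top).ne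
      hf1meas fun t ht => ?_
    exact hC (q t, q₀ t) ⟨hqmem t (hsub ht), hq₀mem t (hsub ht)⟩
  have hint2 : ∀ c ∈ Icc (0:ℝ) M, ∀ u : Set ℝ, MeasurableSet u → u ⊆ Ioc 0 1 →
      IntegrableOn (fun t => Bdiv φ c (q₀ t)) u := by
    intro c hc u hu hsub
    refine integrableOn_of_bdd (C := C) hu (lt_of_le_of_lt (measure_mono hsub) measure_Ioc_lt_top).ne
      (hcont.measurable.comp (measurable_const.prodMk hq₀meas)) fun t ht => ?_
    exact hC (c, q₀ t) ⟨hc, hq₀mem t (hsub ht)⟩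
  -- range facts
  have hαF₀V : α ≤ F₀ V := le_trans (le_cdf_quantile hF₀ hα0 hα1.le) (hF₀m hVge)
  have hF₀V1 : F₀ V ≤ 1 := cdf_le_one hF₀ V
  have hIocsub : Ioc α (F₀ V) ⊆ Ioc 0 1 := Ioc_subset_Ioc hα0.le hF₀V1
  set A := ∫ t in Ioc α (F₀ V), Bdiv φ V (q₀ t) with hAdef
  -- KEY: ε ≤ A
  have hA : ε ≤ A := by
    by_contra hlt
    push_neg at hlt
    set η := (ε - A) / 2 with hηdef
    have hη0 : 0 < η := by simp only [hηdef]; linarith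
    -- right continuity of F₀ at V
    have hrc : Filter.Tendsto F₀ (nhdsWithin V (Ici V)) (nhds (F₀ V)) := hF₀.2.2.2 V
    have hev : ∀ᶠ D in nhdsWithin V (Ici V), F₀ D < F₀ V + η / (2 * (C + 1)) :=
      hrc (Iio_mem_nhds (lt_add_of_pos_right _ (by positivity)))
    rw [eventually_nhdsWithin_iff, Metric.eventually_nhds_iff] at hev
    obtain ⟨δ₂, hδ₂pos, hδ₂⟩ := hev
    set δ₁ := η / (2 * (2 * K + 1)) with hδ₁def
    have hδ₁pos : 0 < δ₁ := by positivity
    have hlt' : sInf S < V + min δ₁ δ₂ := by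
      rw [← hVeq]; exact lt_add_of_pos_right _ (lt_min hδ₁pos hδ₂pos)
    obtain ⟨D, hDS, hDlt⟩ := exists_lt_of_csInf_lt hSne hlt'
    have hDV : V ≤ D := hVeq ▸ csInf_le hbdd hDS
    have hDM : D ≤ M := hDS.1.2
    have hDIcc : D ∈ Icc (0:ℝ) M := ⟨le_trans hV0 hDV, hDM⟩
    have hF₀VD : F₀ V ≤ F₀ D := hF₀m hDV
    have hF₀D1 : F₀ D ≤ 1 := cdf_le_one hF₀ D
    have hDd1 : D - V < δ₁ := by
      have := lt_of_lt_of_le hDlt (add_le_add_right (min_le_left _ _) V); linarith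
    have hF₀small : F₀ D - F₀ V < η / (2 * (C + 1)) := by
      have hd : dist D V < δ₂ := by
        rw [Real.dist_eq, abs_of_nonneg (by linarith)]
        have := lt_of_lt_of_le hDlt (add_le_add_right (min_le_right _ _) V); linarith
      have := hδ₂ hd (mem_Ici.mpr hDV)
      linarith
    -- split the integral defining membership of D in S
    have hsub2 : Ioc (F₀ V) (F₀ D) ⊆ Ioc 0 1 :=
      Ioc_subset_Ioc (le_trans hα0.le hαF₀V) hF₀D1
    have hintD1 : IntegrableOn (fun t => Bdiv φ D (q₀ t)) (Ioc α (F₀ V)) :=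
      hint2 D hDIcc _ measurableSet_Ioc hIocsub
    have hintD2 : IntegrableOn (fun t => Bdiv φ D (q₀ t)) (Ioc (F₀ V) (F₀ D)) :=
      hint2 D hDIcc _ measurableSet_Ioc hsub2
    have hintV : IntegrableOn (fun t => Bdiv φ V (q₀ t)) (Ioc α (F₀ V)) :=
      hint2 V hVIcc _ measurableSet_Ioc hIocsub
    have hdisj : Disjoint (Ioc α (F₀ V)) (Ioc (F₀ V) (F₀ D)) := by
      rw [Set.disjoint_left]
      rintro t ⟨_, h1⟩ ⟨h2, _⟩
      exact absurd h1 (not_le.mpr h2)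
    have h1 : (∫ t in Ioc α (F₀ D), Bdiv φ D (q₀ t)) =
        (∫ t in Ioc α (F₀ V), Bdiv φ D (q₀ t)) +
        ∫ t in Ioc (F₀ V) (F₀ D), Bdiv φ D (q₀ t) := by
      rw [← Ioc_union_Ioc_eq_Ioc hαF₀V hF₀VD]
      exact setIntegral_union hdisj measurableSet_Ioc hintD1 hintD2
    have hconst : IntegrableOn (fun _ : ℝ => 2 * K * (D - V)) (Ioc α (F₀ V)) :=
      (integrableOn_const_iff).mpr (Or.inr measure_Ioc_lt_top)
    have h2 : (∫ t in Ioc α (F₀ V), Bdiv φ D (q₀ t)) ≤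
        ∫ t in Ioc α (F₀ V), (Bdiv φ V (q₀ t) + 2 * K * (D - V)) := by
      refine setIntegral_mono_on hintD1 (hintV.add hconst) measurableSet_Ioc fun t ht => ?_
      have := bdiv_lip hφd hKabs (hq₀mem t (hIocsub ht)) hVIcc hDIcc hDV
      linarith
    have h2' : (∫ t in Ioc α (F₀ V), (Bdiv φ V (q₀ t) + 2 * K * (D - V))) =
        A + (F₀ V - α) * (2 * K * (D - V)) := by
      rw [integral_add hintV hconst, setIntegral_const, hAdef]
      rw [measureReal_def, Real.volume_Ioc, ENNReal.toReal_ofReal (by linarith), smul_eq_mul]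
    have h3 : (∫ t in Ioc (F₀ V) (F₀ D), Bdiv φ D (q₀ t)) ≤ C * (F₀ D - F₀ V) := by
      have hic : IntegrableOn (fun _ : ℝ => C) (Ioc (F₀ V) (F₀ D)) :=
        (integrableOn_const_iff).mpr (Or.inr measure_Ioc_lt_top)
      calc (∫ t in Ioc (F₀ V) (F₀ D), Bdiv φ D (q₀ t)) ≤ ∫ _ in Ioc (F₀ V) (F₀ D), C := by
            refine setIntegral_mono_on hintD2 hic measurableSet_Ioc fun t ht => ?_
            exact le_trans (le_abs_self _)
              (by rw [← Real.norm_eq_abs]; exact hC (D, q₀ t) ⟨hDIcc, hq₀mem t (hsub2 ht)⟩)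
        _ = (F₀ D - F₀ V) * C := by
            rw [setIntegral_const, measureReal_def, Real.volume_Ioc, ENNReal.toReal_ofReal (by linarith),
              smul_eq_mul]
        _ = C * (F₀ D - F₀ V) := mul_comm _ _
    have hεD : ε ≤ ∫ t in Ioc α (F₀ D), Bdiv φ D (q₀ t) := hDS.2
    rw [h1] at hεD
    have hF₀Vα1 : F₀ V - α ≤ 1 := by linarith
    have hKD : (F₀ V - α) * (2 * K * (D - V)) ≤ η / 2 := by
      have e1 : 2 * K * (D - V) ≤ 2 * K * δ₁ :=
        mul_le_mul_of_nonneg_left hDd1.le (by linarith)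
      have e2 : 2 * K * δ₁ ≤ η / 2 := by
        rw [hδ₁def]; exact aux_div (by linarith) hη0
      have e3 : 0 ≤ 2 * K * (D - V) := mul_nonneg (by linarith) (by linarith)
      calc (F₀ V - α) * (2 * K * (D - V)) ≤ 1 * (2 * K * (D - V)) :=
            mul_le_mul_of_nonneg_right hF₀Vα1 e3
        _ = 2 * K * (D - V) := one_mul _
        _ ≤ 2 * K * δ₁ := e1
        _ ≤ η / 2 := e2
    have hCD : C * (F₀ D - F₀ V) ≤ η / 2 := by
      have e1 : C * (F₀ D - F₀ V) ≤ C * (η / (2 * (C + 1))) :=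
        mul_le_mul_of_nonneg_left hF₀small.le hC0
      have e2 : C * (η / (2 * (C + 1))) ≤ η / 2 := aux_div hC0 hη0
      linarith
    have : ε ≤ A + η := by linarith
    simp only [hηdef] at this
    linarith
  -- V is strictly above q₀ α
  have hVpos : q₀ α < V := by
    rcases lt_or_eq_of_le hVge with h | h
    · exact h
    · exfalso
      have hz : EqOn (fun t => Bdiv φ V (q₀ t)) (fun _ => (0:ℝ)) (Ioc α (F₀ V)) := by
        intro t ht
        have h1 : q₀ t ≤ V := quantile_le hF₀ (lt_trans hα0 ht.1) ht.2
        have h2 : V ≤ q₀ t := h ▸ quantile_mono hF₀ hα0 ht.1.le (le_trans ht.2 hF₀V1)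
        simp only
        rw [le_antisymm h1 h2, bdiv_self]
      have hA0 : A = 0 := by
        rw [hAdef, setIntegral_congr_fun measurableSet_Ioc hz]; simp
      rw [hA0] at hA
      linarith
  -- the midpoint x₀ and the level s
  set x₀ := (q₀ α + V) / 2 with hx₀def
  have hx₀l : q₀ α < x₀ := by simp only [hx₀def]; linarith
  have hx₀u : x₀ < V := by simp only [hx₀def]; linarith
  set s := F x₀ with hsdef
  have hs0 : 0 ≤ s := cdf_nonneg hFcdf x₀
  have hsα : s < α := by
    by_contra h
    push_neg at h
    have : q α ≤ x₀ := quantile_le hFcdf hα0 h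
    rw [hqF] at this
    linarith
  -- pointwise positivity on Ioo s α
  have hpos : ∀ t ∈ Ioo s α, 0 < Bdiv φ (q t) (q₀ t) := by
    intro t ht
    obtain ⟨hts, htα⟩ := ht
    have ht0 : 0 < t := lt_of_le_of_lt hs0 hts
    have ht1 : t ≤ 1 := (lt_trans htα hα1).le
    have hqt : x₀ ≤ q t := by
      refine le_quantile hFcdf ht1 fun z hz => ?_
      by_contra hzx
      push_neg at hzx
      have : F z ≤ s := hFcdf.1 hzx.le
      linarith
    have hq₀t : q₀ t ≤ q₀ α := quantile_mono hF₀ ht0 htα.le hα1.le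
    exact bdiv_pos hφ hφd (by intro hc; rw [hc] at hqt; linarith)
  -- positivity of the integral over Ioo s α
  have hsubsα : Ioo s α ⊆ Ioc 0 1 := fun t ht =>
    ⟨lt_of_le_of_lt hs0 ht.1, (lt_trans ht.2 hα1).le⟩
  have hintsα : IntegrableOn (fun t => Bdiv φ (q t) (q₀ t)) (Ioo s α) :=
    hint1 _ measurableSet_Ioo hsubsα
  have hP : 0 < ∫ t in Ioo s α, Bdiv φ (q t) (q₀ t) := by
    rw [setIntegral_pos_iff_support_of_nonneg_ae
      ((ae_restrict_iff' measurableSet_Ioo).mpr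
        (Filter.Eventually.of_forall fun t ht => (hpos t ht).le)) hintsα]
    calc (0:ENNReal) < volume (Ioo s α) := by
          rw [Real.volume_Ioo]; exact ENNReal.ofReal_pos.mpr (by linarith)
      _ ≤ volume (Function.support (fun t => Bdiv φ (q t) (q₀ t)) ∩ Ioo s α) :=
          measure_mono fun t ht => ⟨(hpos t ht).ne', ht⟩
  -- comparison on Ioo α (F₀ V)
  have hsubαV : Ioo α (F₀ V) ⊆ Ioc 0 1 := fun t ht => ⟨lt_trans hα0 ht.1, ht.2.le.trans hF₀V1⟩
  have hintαV : IntegrableOn (fun t => Bdiv φ (q t) (q₀ t)) (Ioo α (F₀ V)) :=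
    hint1 _ measurableSet_Ioo hsubαV
  have hintVαV : IntegrableOn (fun t => Bdiv φ V (q₀ t)) (Ioo α (F₀ V)) :=
    hint2 V hVIcc _ measurableSet_Ioo hsubαV
  have hmono2 : (∫ t in Ioo α (F₀ V), Bdiv φ V (q₀ t)) ≤
      ∫ t in Ioo α (F₀ V), Bdiv φ (q t) (q₀ t) := by
    refine setIntegral_mono_on hintVαV hintαV measurableSet_Ioo fun t ht => ?_
    have ht0 : 0 < t := lt_trans hα0 ht.1
    have hq₀t : q₀ t ≤ V := quantile_le hF₀ ht0 ht.2.le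
    have hVqt : V ≤ q t := by
      calc V = q α := hqF.symm
        _ ≤ q t := quantile_mono hFcdf hα0 ht.1.le (ht.2.le.trans hF₀V1)
    exact bdiv_mono hφ hφd hq₀t hVqt
  have hAIoo : A = ∫ t in Ioo α (F₀ V), Bdiv φ V (q₀ t) := by
    rw [hAdef]; exact integral_Ioc_eq_integral_Ioo
  -- assemble the chain
  have hdisj2 : Disjoint (Ioo s α) (Ioo α (F₀ V)) := by
    rw [Set.disjoint_left]
    rintro t ⟨_, h1⟩ ⟨h2, _⟩
    exact absurd h1 (not_lt.mpr h2.le)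
  have hunion : (∫ t in Ioo s α ∪ Ioo α (F₀ V), Bdiv φ (q t) (q₀ t)) =
      (∫ t in Ioo s α, Bdiv φ (q t) (q₀ t)) +
      ∫ t in Ioo α (F₀ V), Bdiv φ (q t) (q₀ t) :=
    setIntegral_union hdisj2 measurableSet_Ioo hintsα hintαV
  have hsubu : Ioo s α ∪ Ioo α (F₀ V) ⊆ Ioo 0 1 := by
    refine union_subset (fun t ht => ⟨lt_of_le_of_lt hs0 ht.1, lt_trans ht.2 hα1⟩)
      fun t ht => ⟨lt_trans hα0 ht.1, lt_of_lt_of_le ht.2 hF₀V1⟩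
  have hint01 : IntegrableOn (fun t => Bdiv φ (q t) (q₀ t)) (Ioo 0 1) :=
    hint1 _ measurableSet_Ioo Ioo_subset_Ioc_self
  have hchain : (∫ t in Ioo s α ∪ Ioo α (F₀ V), Bdiv φ (q t) (q₀ t)) ≤
      ∫ t in Ioo (0:ℝ) 1, Bdiv φ (q t) (q₀ t) :=
    setIntegral_mono_set hint01
      (Filter.Eventually.of_forall fun t => bdiv_nonneg hφ hφd _ _)
      (HasSubset.Subset.eventuallyLE hsubu)
  have hcost' : (∫ t in Ioo (0:ℝ) 1, Bdiv φ (q t) (q₀ t)) ≤ ε := hcost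
  linarith [hmono2, hA, hAIoo ▸ hA]
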